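/- Let c ∈ F∖{0}. If c does not belong to the set {λ_1^{i_1}·λ_2^{i_2}···λ_n^{i_n} | (i_1,…,i_n) ∈ ℤ^n} of integer power products of λ_1,…,λ_n, then the only g ∈ K satisfying c·σ(g) − g = 0 is g = 0. -/

import Mathlib

/-!
Write `g = p / q` with polynomials `p, q`. On polynomials `σ` restricts to the scaling
`φ : Xᵢ ↦ λᵢ Xᵢ`, which multiplies the coefficient of `X^m` by `λ^m` and so preserves supports,
leading monomials and (up to the factor `λ^m`) leading coefficients. The equation `c σ(g) = g`
becomes `c φ(p) q = p φ(q)`, and comparing leading coefficients for any monomial order gives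
`c λ^(deg p) = λ^(deg q)`, i.e. `c = λ^(deg q - deg p)`.
-/

open MvPolynomial

/-- `K F n` is the rational function field `F(α₁,…,αₙ)`. -/
abbrev K (F : Type*) [Field F] (n : ℕ) := FractionRing (MvPolynomial (Fin n) F)

/-- The canonical image of the variable `αᵢ` in `K F n`. -/
noncomputable def α {F : Type*} [Field F] {n : ℕ} (i : Fin n) : K F n :=
  algebraMap (MvPolynomial (Fin n) F) (K F n) (X i)

namespace MvPolynomial

variable {ι R : Type*} [CommSemiring R]

noncomputable def scaleVars (lam : ι → R) : MvPolynomial ι R →ₐ[R] MvPolynomial ι R :=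
  aeval fun i => C (lam i) * X i

theorem scaleVars_monomial (lam : ι → R) (d : ι →₀ ℕ) (a : R) :
    scaleVars lam (monomial d a) = monomial d ((d.prod fun i k => lam i ^ k) * a) := by
  simp only [scaleVars, aeval_monomial, mul_pow, Finsupp.prod_mul, algebraMap_eq]
  rw [monomial_eq, C_mul, map_finsuppProd]
  simp only [map_pow]
  ring

theorem coeff_scaleVars (lam : ι → R) (p : MvPolynomial ι R) (m : ι →₀ ℕ) :
    coeff m (scaleVars lam p) = (m.prod fun i k => lam i ^ k) * coeff m p := by
  classical
  induction p using MvPolynomial.induction_on' with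
  | monomial d a =>
    rw [scaleVars_monomial, coeff_monomial, coeff_monomial]
    split_ifs with h
    · rw [h]
    · rw [mul_zero]
  | add p q hp hq => rw [map_add, coeff_add, coeff_add, hp, hq, mul_add]

theorem algebraMap_C {A : Type*} [CommSemiring A] [Algebra R A] [Algebra (MvPolynomial ι R) A]
    [IsScalarTower R (MvPolynomial ι R) A] (r : R) :
    algebraMap (MvPolynomial ι R) A (C r) = algebraMap R A r := by
  rw [← algebraMap_eq, ← IsScalarTower.algebraMap_apply]

theorem support_scaleVars {R : Type*} [CommRing R] [IsDomain R] {lam : ι → R}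
    (hlam : ∀ i, lam i ≠ 0) (p : MvPolynomial ι R) :
    (scaleVars lam p).support = p.support := by
  ext m
  rw [mem_support_iff, mem_support_iff, coeff_scaleVars, mul_ne_zero_iff, and_iff_right]
  exact Finsupp.prod_ne_zero_iff.mpr fun i _ => pow_ne_zero _ (hlam i)

end MvPolynomial

namespace MonomialOrder

variable {ι R : Type*} [CommRing R] [IsDomain R] (m : MonomialOrder ι) {lam : ι → R}

theorem degree_scaleVars (hlam : ∀ i, lam i ≠ 0) (p : MvPolynomial ι R) :
    m.degree (scaleVars lam p) = m.degree p := by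
  rw [degree, degree, support_scaleVars hlam]

theorem leadingCoeff_scaleVars (hlam : ∀ i, lam i ≠ 0) (p : MvPolynomial ι R) :
    m.leadingCoeff (scaleVars lam p) =
      ((m.degree p).prod fun i k => lam i ^ k) * m.leadingCoeff p := by
  rw [leadingCoeff, leadingCoeff, degree_scaleVars m hlam, coeff_scaleVars]

theorem mul_prod_pow_degree_eq_of_scaleVars {c : R} {p q : MvPolynomial ι R}
    (hlam : ∀ i, lam i ≠ 0) (hp : p ≠ 0) (hq : q ≠ 0)
    (h : C c * scaleVars lam p * q = p * scaleVars lam q) :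
    c * (m.degree p).prod (fun i k => lam i ^ k) = (m.degree q).prod fun i k => lam i ^ k := by
  have hlc := congrArg m.leadingCoeff h
  simp only [leadingCoeff_mul, leadingCoeff_C, leadingCoeff_scaleVars m hlam] at hlc
  have hpq : m.leadingCoeff p * m.leadingCoeff q ≠ 0 :=
    mul_ne_zero (m.leadingCoeff_ne_zero_iff.mpr hp) (m.leadingCoeff_ne_zero_iff.mpr hq)
  exact mul_right_cancel₀ hpq (by linear_combination hlc)

end MonomialOrder

theorem prod_zpow_sub_eq_of_mul_prod_pow_eq {ι F : Type*} [Fintype ι] [Field F]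
    {lam : ι → F} (hlam : ∀ i, lam i ≠ 0) {c : F} {a b : ι → ℕ}
    (h : c * ∏ i, lam i ^ a i = ∏ i, lam i ^ b i) :
    ∏ i, lam i ^ ((b i : ℤ) - a i) = c := by
  have ha : ∏ i, lam i ^ a i ≠ 0 := Finset.prod_ne_zero_iff.mpr fun i _ => pow_ne_zero _ (hlam i)
  simp only [zpow_sub₀ (hlam _), zpow_natCast, Finset.prod_div_distrib, ← h]
  field_simp

theorem algHom_algebraMap_eq_scaleVars {F : Type*} [Field F] {n : ℕ} {lam : Fin n → F}
    (σ : K F n →ₐ[F] K F n) (hσ : ∀ i, σ (α i) = algebraMap F (K F n) (lam i) * α i)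
    (r : MvPolynomial (Fin n) F) :
    σ (algebraMap _ _ r) = algebraMap _ _ (scaleVars lam r) := by
  let toK := IsScalarTower.toAlgHom F (MvPolynomial (Fin n) F) (K F n)
  suffices σ.comp toK = toK.comp (scaleVars lam) from AlgHom.congr_fun this r
  refine MvPolynomial.algHom_ext fun i => ?_
  simpa [toK, scaleVars, α, algebraMap_C] using hσ i

theorem stmt_16_general {F : Type*} [Field F]
    {n : ℕ}
    (lam : Fin n → F) (hlam : ∀ i, lam i ≠ 0)
    (σ : K F n ≃ₐ[F] K F n)
    (hσ : ∀ i, σ (α i) = algebraMap F (K F n) (lam i) * α i)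
    (c : F)
    (hcpow : ¬ ∃ i : Fin n → ℤ, (∏ t, lam t ^ i t) = c) :
    ∀ g : K F n, algebraMap F (K F n) c * σ g - g = 0 → g = 0 := by
  intro g hg
  obtain ⟨p, q, hq, rfl⟩ := IsFractionRing.div_surjective (A := MvPolynomial (Fin n) F) g
  by_cases hp : p = 0
  · rw [hp, map_zero, zero_div]
  have hq0 : q ≠ 0 := nonZeroDivisors.ne_zero hq
  have hσA : ∀ r, σ (algebraMap _ (K F n) r) = algebraMap _ _ (scaleVars lam r) :=
    algHom_algebraMap_eq_scaleVars σ.toAlgHom hσ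
  have hAq : algebraMap _ (K F n) q ≠ 0 := by simpa using hq0
  have hAφq : algebraMap _ (K F n) (scaleVars lam q) ≠ 0 := by
    simpa [← hσA] using hAq
  have hpoly : C c * scaleVars lam p * q = p * scaleVars lam q := by
    apply IsFractionRing.injective (MvPolynomial (Fin n) F) (K F n)
    rw [sub_eq_zero, map_div₀, hσA, hσA, ← mul_div_assoc, div_eq_div_iff hAφq hAq] at hg
    simpa only [map_mul, algebraMap_C] using hg
  have hdeg := MonomialOrder.lex.mul_prod_pow_degree_eq_of_scaleVars hlam hp hq0 hpoly
  simp only [Finsupp.prod_fintype _ _ fun i => pow_zero (lam i)] at hdeg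
  exact (hcpow ⟨_, prod_zpow_sub_eq_of_mul_prod_pow_eq hlam hdeg⟩).elim

/-- Let `σ` be the `F`-algebra automorphism of `K = F(α₁,…,αₙ)` with
`σ(αᵢ) = λᵢ αᵢ` (all `λᵢ` nonzero). Let `c ∈ F∖{0}`. If `c` is not an integer power
product `λ₁^{i₁}⋯λₙ^{iₙ}` (with `(i₁,…,iₙ) ∈ ℤⁿ`), then the only `g ∈ K` with
`c·σ(g) − g = 0` is `g = 0`. -/
theorem stmt_16 {F : Type*} [Field F] [Algebra F (AlgebraicClosure ℚ)]
    {n : ℕ} (hn : 1 ≤ n)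
    (lam : Fin n → F) (hlam : ∀ i, lam i ≠ 0)
    (σ : K F n ≃ₐ[F] K F n)
    (hσ : ∀ i, σ (α i) = algebraMap F (K F n) (lam i) * α i)
    (c : F) (hc : c ≠ 0)
    (hcpow : ¬ ∃ i : Fin n → ℤ, (∏ t, lam t ^ i t) = c) :
    ∀ g : K F n, algebraMap F (K F n) c * σ g - g = 0 → g = 0 :=
  stmt_16_general lam hlam σ hσ c hcpow
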